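/- Let X be a compact metric space and F a finite family of homeomorphisms of X such that IFS(F) is strongly transitive. Suppose some element h of the semigroup F^+ has a repelling fixed point q, i.e., h(q) = q and there is an open neighborhood B of q contained in the unstable set W^u(q) = {y : h^{-n}(y) → q as n → ∞}, with q not isolated in X. Then IFS(F) is sensitive. -/
import Mathlib


open Metric Set

variable {X : Type*} [MetricSpace X]

/-- The semigroup generated by `F`: all finite (nonempty) compositions. -/
def SemigroupGen (F : Set (X ≃ₜ X)) : Set (X ≃ₜ X) :=
  {h | ∃ l : List (X ≃ₜ X), l ≠ [] ∧ (∀ f ∈ l, f ∈ F) ∧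
    h = l.foldr Homeomorph.trans (Homeomorph.refl X)}

def ForwardOrbit (F : Set (X ≃ₜ X)) (x : X) : Set X :=
  {y | ∃ h ∈ SemigroupGen F, y = h x}

def BackwardOrbit (F : Set (X ≃ₜ X)) (x : X) : Set X :=
  {y | ∃ h ∈ SemigroupGen F, y = h.symm x}

def ForwardMinimal (F : Set (X ≃ₜ X)) : Prop := ∀ x : X, Dense (ForwardOrbit F x)

def StronglyTransitive (F : Set (X ≃ₜ X)) : Prop := ∀ x : X, Dense (BackwardOrbit F x)

def Sensitive (F : Set (X ≃ₜ X)) : Prop :=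
  ∃ δ > 0, ∀ x : X, ∀ r > 0, ∃ y ∈ ball x r, ∃ h ∈ SemigroupGen F,
    δ < dist (h x) (h y)

def TopologicallyTransitive (F : Set (X ≃ₜ X)) : Prop :=
  ∀ U V : Set X, IsOpen U → IsOpen V → U.Nonempty → V.Nonempty →
    ∃ h ∈ SemigroupGen F, ((h : X → X) '' U ∩ V).Nonempty

def STransitive (F : Set (X ≃ₜ X)) : Prop :=
  ∀ U : Set X, IsOpen U → U.Nonempty →
    ∃ (ℓ : ℕ) (T : Fin ℓ → (X ≃ₜ X)), (∀ i, T i ∈ SemigroupGen F) ∧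
      (univ : Set X) ⊆ closure (⋃ i, (T i : X → X) '' U)

lemma foldr_trans_append (l₁ l₂ : List (X ≃ₜ X)) :
    (l₁ ++ l₂).foldr Homeomorph.trans (Homeomorph.refl X) =
    (l₁.foldr Homeomorph.trans (Homeomorph.refl X)).trans
      (l₂.foldr Homeomorph.trans (Homeomorph.refl X)) := by
  induction l₁ with
  | nil => ext x; rfl
  | cons a l ih => simp only [List.cons_append, List.foldr_cons, ih]; ext x; rfl

lemma SemigroupGen.trans_mem {F : Set (X ≃ₜ X)} {g₁ g₂ : X ≃ₜ X}
    (h₁ : g₁ ∈ SemigroupGen F) (h₂ : g₂ ∈ SemigroupGen F) :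
    g₁.trans g₂ ∈ SemigroupGen F := by
  obtain ⟨l₁, hl₁, hm₁, rfl⟩ := h₁
  obtain ⟨l₂, hl₂, hm₂, rfl⟩ := h₂
  refine ⟨l₁ ++ l₂, by simp [hl₁], ?_, (foldr_trans_append l₁ l₂).symm⟩
  intro f hf
  rcases List.mem_append.1 hf with hx | hx
  exacts [hm₁ f hx, hm₂ f hx]

lemma SemigroupGen.iter_mem {F : Set (X ≃ₜ X)} {h S : X ≃ₜ X}
    (hh : h ∈ SemigroupGen F) (hS : S ∈ SemigroupGen F) (n : ℕ) :
    ∃ T ∈ SemigroupGen F, ∀ x, T x = (⇑h)^[n] (S x) := by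
  induction n with
  | zero => exact ⟨S, hS, fun x => rfl⟩
  | succ n ih =>
    obtain ⟨T, hT, hTx⟩ := ih
    refine ⟨T.trans h, SemigroupGen.trans_mem hT hh, fun x => ?_⟩
    simp [Homeomorph.trans_apply, hTx, Function.iterate_succ_apply']

/-- Strong transitivity together with a repelling fixed point implies sensitivity. -/
theorem strongly_transitive_repelling_fixed_point_sensitive
    {X : Type*} [MetricSpace X] [CompactSpace X]
    (hniso : ∀ x : X, ¬ IsOpen ({x} : Set X))
    (F : Set (X ≃ₜ X)) (hF : F.Finite) (hst : StronglyTransitive F)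
    (h : X ≃ₜ X) (hh : h ∈ SemigroupGen F) (q : X) (hq : h q = q)
    (B : Set X) (hB : IsOpen B) (hqB : q ∈ B)
    (hrep : ∀ y ∈ B, Filter.Tendsto (fun n => (⇑h.symm)^[n] y) Filter.atTop (nhds q)) :
    Sensitive F := by
  -- pick b ∈ B, b ≠ q
  have hbB : ∃ b ∈ B, b ≠ q := by
    by_contra hcon
    push_neg at hcon
    have : B = {q} := Set.eq_singleton_iff_unique_mem.2 ⟨hqB, hcon⟩
    exact hniso q (this ▸ hB)
  obtain ⟨b, hbB, hbq⟩ := hbB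
  refine ⟨dist b q / 3, by have := dist_pos.2 hbq; linarith, ?_⟩
  intro x r hr
  -- strong transitivity: find u ∈ ball x r with S u = q
  obtain ⟨u, hu, huball⟩ := (hst q).exists_mem_open isOpen_ball ⟨x, mem_ball_self hr⟩
  obtain ⟨S, hS, rfl⟩ := hu
  set u := S.symm q with hu_def
  -- W : open neighborhood of q
  have hWopen : IsOpen ((⇑S '' ball x r) ∩ B) :=
    (S.isOpen_image.2 isOpen_ball).inter hB
  have hqW : q ∈ (⇑S '' ball x r) ∩ B :=
    ⟨⟨u, huball, S.apply_symm_apply q⟩, hqB⟩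
  -- find n with h.symm^[n] b ∈ W
  have := (hrep b hbB).eventually (hWopen.mem_nhds hqW)
  obtain ⟨n, hn⟩ := this.exists
  obtain ⟨⟨y, hyball, hSy⟩, -⟩ := hn
  obtain ⟨T, hT, hTx⟩ := SemigroupGen.iter_mem hh hS n
  have hTu : T u = q := by
    rw [hTx, hu_def, S.apply_symm_apply]
    exact Function.iterate_fixed hq n
  have hTy : T y = b := by
    rw [hTx, hSy]
    exact (Function.LeftInverse.iterate h.apply_symm_apply n) b
  have hkey : dist (T u) (T y) = dist b q := by rw [hTu, hTy, dist_comm]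
  rcases le_or_gt (dist (T x) (T u)) (dist b q / 3) with hc | hc
  · refine ⟨y, hyball, T, hT, ?_⟩
    have htri := dist_triangle (T u) (T x) (T y)
    have hbq3 : 0 < dist b q := dist_pos.2 hbq
    have : dist (T u) (T x) = dist (T x) (T u) := dist_comm _ _
    linarith [hkey]
  · exact ⟨u, huball, T, hT, hc⟩
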